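/- Let B be a skew-symmetrizable n×n integer matrix with positive diagonal skew-symmetrizer D, and let t be reached from t_0 by the path (i_1,…,i_m) with intermediate vertices t_0, t_1, …, t_m = t. Then the 2n×2n C-matrix of the principal extension satisfies the block identity C^{B̄;t_0}_t = [[C^{B;t_0}_t, X], [O, I_n]], where X = Σ_{s=0}^{m−1} ( C^{B;t_0}_{t_s} [D^{−1}(C^{B;t_0}_{t_s})^T D]^{i_{s+1}•}_+ − [C^{B;t_0}_{t_s}]^{•i_{s+1}}_+ D^{−1}(C^{B;t_0}_{t_s})^T D ). -/

import Mathlib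

open Matrix

section Defs

variable {ι : Type} [Fintype ι] [DecidableEq ι]
variable {R : Type} [CommRing R] [LinearOrder R] [IsStrictOrderedRing R]

/-- Entrywise positive part `[A]₊`. -/
def matPos (A : Matrix ι ι R) : Matrix ι ι R := fun i j => max (A i j) 0

/-- `A^{k•}`: the matrix keeping only the `k`-th row of `A`. -/
def rowSel (k : ι) (A : Matrix ι ι R) : Matrix ι ι R := fun i j => if i = k then A i j else 0

/-- `A^{•k}`: the matrix keeping only the `k`-th column of `A`. -/
def colSel (k : ι) (A : Matrix ι ι R) : Matrix ι ι R := fun i j => if j = k then A i j else 0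

/-- Entrywise maximum of two matrices. -/
def emax (A B : Matrix ι ι R) : Matrix ι ι R := fun i j => max (A i j) (B i j)

/-- `J_ℓ`: identity matrix with `(ℓ,ℓ)` entry replaced by `-1`. -/
def Jmat (ℓ : ι) : Matrix ι ι R := Matrix.diagonal fun i => if i = ℓ then -1 else 1

/-- Matrix mutation `μ_k(B)` in direction `k`. -/
def mutate (B : Matrix ι ι R) (k : ι) : Matrix ι ι R := fun i j =>
  if i = k ∨ j = k then -(B i j)
  else B i j + max (B i k) 0 * B k j + B i k * max (-(B k j)) 0

/-- The data `(B_t, C_t, G_t, F_t)` attached to a vertex. -/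
structure SeedData (ι R : Type) where
  B : Matrix ι ι R
  C : Matrix ι ι R
  G : Matrix ι ι R
  F : Matrix ι ι R

/-- One final-seed mutation step in direction `ℓ` (with initial exchange matrix `B0`). -/
def seedStep (B0 : Matrix ι ι R) (s : SeedData ι R) (ℓ : ι) : SeedData ι R where
  B := mutate s.B ℓ
  C := s.C * (Jmat ℓ + rowSel ℓ (matPos s.B)) + colSel ℓ (matPos (-s.C)) * s.B
  G := s.G * (Jmat ℓ + colSel ℓ (matPos s.B)) - B0 * colSel ℓ (matPos s.C)
  F := s.F * Jmat ℓ + emax (colSel ℓ (matPos s.C) + s.F * colSel ℓ (matPos s.B))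
      (colSel ℓ (matPos (-s.C)) + s.F * colSel ℓ (matPos (-s.B)))

/-- The seed data at the endpoint of the path `p` starting from the initial vertex. -/
def seedOf (B0 : Matrix ι ι R) (p : List ι) : SeedData ι R :=
  p.foldl (seedStep B0) ⟨B0, 1, 1, 0⟩

/-- The exchange matrix `B_t` at the end of the path `p`. -/
def Bpath (B : Matrix ι ι R) (p : List ι) : Matrix ι ι R := (seedOf B p).B

/-- The `C`-matrix `C^{B;t_0}_t` at the end of the path `p`. -/
def Cmat (B : Matrix ι ι R) (p : List ι) : Matrix ι ι R := (seedOf B p).C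

/-- The `G`-matrix `G^{B;t_0}_t` at the end of the path `p`. -/
def Gmat (B : Matrix ι ι R) (p : List ι) : Matrix ι ι R := (seedOf B p).G

/-- The `F`-matrix `F^{B;t_0}_t` at the end of the path `p`. -/
def Fmat (B : Matrix ι ι R) (p : List ι) : Matrix ι ι R := (seedOf B p).F

/-- `B` is skew-symmetrizable: `DB` is skew-symmetric for some positive diagonal `D`. -/
def IsSkewSymmetrizable (B : Matrix ι ι ℤ) : Prop :=
  ∃ d : ι → ℤ, (∀ i, 0 < d i) ∧ (Matrix.diagonal d * B)ᵀ = -(Matrix.diagonal d * B)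

/-- Column sign-coherence: every column is nonzero and has all entries of one sign. -/
def ColSignCoherent (A : Matrix ι ι ℤ) : Prop :=
  ∀ j, (∃ i, A i j ≠ 0) ∧ ((∀ i, 0 ≤ A i j) ∨ (∀ i, A i j ≤ 0))

/-- Row sign-coherence: every row is nonzero and has all entries of one sign. -/
def RowSignCoherent (A : Matrix ι ι ℤ) : Prop :=
  ∀ i, (∃ j, A i j ≠ 0) ∧ ((∀ j, 0 ≤ A i j) ∨ (∀ j, A i j ≤ 0))

/-- `ε` is the column sign `ε_{•ℓ}(A)` of the (sign-coherent, nonzero) `ℓ`-th column of `A`. -/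
def IsColSign (ε : ℤ) (A : Matrix ι ι ℤ) (ℓ : ι) : Prop :=
  (ε = 1 ∨ ε = -1) ∧ (∃ i, A i ℓ ≠ 0) ∧ ∀ i, 0 ≤ ε * A i ℓ

/-- `ε` is the row sign `ε_{k•}(A)` of the (sign-coherent, nonzero) `k`-th row of `A`. -/
def IsRowSign (ε : ℤ) (A : Matrix ι ι ℤ) (k : ι) : Prop :=
  (ε = 1 ∨ ε = -1) ∧ (∃ j, A k j ≠ 0) ∧ ∀ j, 0 ≤ ε * A k j

/-- Sign-coherence of `C`-matrices: for every skew-symmetrizable initial integer matrix and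
every path, the associated `C`-matrix is column sign-coherent. -/
def SignCoherenceOfC : Prop :=
  ∀ (κ : Type) [Fintype κ] [DecidableEq κ], ∀ B : Matrix κ κ ℤ,
    IsSkewSymmetrizable B → ∀ p : List κ, ColSignCoherent (Cmat B p)

/-- The principal extension `B̄ = [[B, -I],[I, O]]` of `B`, on the index type `Fin n ⊕ Fin n`. -/
def pext {n : ℕ} (B : Matrix (Fin n) (Fin n) ℤ) :
    Matrix (Fin n ⊕ Fin n) (Fin n ⊕ Fin n) ℤ :=
  Matrix.fromBlocks B (-1) 1 0

noncomputable section FPolys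

/-- The ambient field of rational functions `ℚ(y_i : i ∈ ι)` (fraction field of `ℤ[y_i]`). -/
abbrev FField (ι : Type) := FractionRing (MvPolynomial ι ℤ)

/-- The variable `y_i` inside the fraction field. -/
def yvar (i : ι) : FField ι := algebraMap (MvPolynomial ι ℤ) (FField ι) (MvPolynomial.X i)

/-- One mutation step for the triple `(B_t, C_t, (F_{j;t})_j)`. -/
def fpolyStep (s : Matrix ι ι ℤ × Matrix ι ι ℤ × (ι → FField ι)) (ℓ : ι) :
    Matrix ι ι ℤ × Matrix ι ι ℤ × (ι → FField ι) :=
  ⟨mutate s.1 ℓ,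
   s.2.1 * (Jmat ℓ + rowSel ℓ (matPos s.1)) + colSel ℓ (matPos (-s.2.1)) * s.1,
   fun j => if j = ℓ then
     (s.2.2 ℓ)⁻¹ *
       ((∏ i, yvar i ^ (max (s.2.1 i ℓ) 0).toNat) * (∏ i, s.2.2 i ^ (max (s.1 i ℓ) 0).toNat)
        + (∏ i, yvar i ^ (max (-(s.2.1 i ℓ)) 0).toNat) *
            (∏ i, s.2.2 i ^ (max (-(s.1 i ℓ)) 0).toNat))
   else s.2.2 j⟩

/-- The `F`-polynomial `F^{B;t_0}_{j;t}` (as an element of the field of rational functions)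
at the end of the path `p`. -/
def Fpoly (B : Matrix ι ι ℤ) (p : List ι) : ι → FField ι :=
  (p.foldl fpolyStep ⟨B, 1, fun _ => 1⟩).2.2

/-- The polynomial representing an element of the fraction field (when it is a polynomial). -/
def polyOf (x : FField ι) : MvPolynomial ι ℤ := by
  classical exact
    if h : ∃ q : MvPolynomial ι ℤ, algebraMap (MvPolynomial ι ℤ) (FField ι) q = x then
      h.choose else 0

/-- The `H`-matrix `H^{B;t_0}_t`: `h_{ij;t}` is the minimum over exponent vectors `a` in the
support of `F^{B;t_0}_{j;t}` of `-a_i + ∑_{l ≠ i} [-b_{il}]₊ a_l`. -/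
def Hmat (B : Matrix ι ι ℤ) (p : List ι) : Matrix ι ι ℤ := fun i j =>
  if h : (polyOf (Fpoly B p j)).support.Nonempty then
    (polyOf (Fpoly B p j)).support.inf' h
      (fun a => -(a i : ℤ) + ∑ l ∈ Finset.univ.erase i, max (-(B i l)) 0 * (a l : ℤ))
  else 0

end FPolys

/-- The embedding `ℚ(y_1,…,y_n) → ℚ(y_1,…,y_{2n})` sending `y_i` to `y_i`
(the second batch of variables indexed by the right summand). -/
noncomputable def embK (n : ℕ) : FField (Fin n) →+* FField (Fin n ⊕ Fin n) :=
  IsFractionRing.lift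
    (g := (algebraMap (MvPolynomial (Fin n ⊕ Fin n) ℤ) (FField (Fin n ⊕ Fin n))).comp
      (MvPolynomial.rename (Sum.inl : Fin n → Fin n ⊕ Fin n)).toRingHom)
    (by
      intro a b hab
      simp only [RingHom.coe_comp, Function.comp_apply, AlgHom.toRingHom_eq_coe,
        RingHom.coe_coe] at hab
      exact MvPolynomial.rename_injective _ Sum.inl_injective
        (IsFractionRing.injective (MvPolynomial (Fin n ⊕ Fin n) ℤ)
          (FField (Fin n ⊕ Fin n)) hab))

/-- `D⁻¹ Cᵀ D` over `ℚ`, for the positive diagonal skew-symmetrizer `D = diagonal d`. -/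
noncomputable def dCd {n : ℕ} (d : Fin n → ℤ) (C : Matrix (Fin n) (Fin n) ℤ) :
    Matrix (Fin n) (Fin n) ℚ :=
  (Matrix.diagonal fun i => (d i : ℚ))⁻¹ * (C.map (Int.cast : ℤ → ℚ))ᵀ *
    Matrix.diagonal fun i => (d i : ℚ)

end Defs

/-! Mutating the principal extension `B̄` only in directions `inl k`, the top-left blocks of
`B̄_t` and `C̄_t` evolve exactly like `B_t` and `C_t`, and the rows `inr i` of `C̄_t` stay unit
vectors because those directions are never mutated. Since `D B_t` stays skew-symmetric, the signs
of `b_ik` and `b_ki` are opposite, and this keeps the top-right block of `B̄_t` equal to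
`-D⁻¹ C_tᵀ D`. Substituting it into the `C`-recursion, and using `[-x]₊ = [x]₊ - x`, each
mutation in direction `k` adds `C_t [D⁻¹ C_tᵀ D]^{k•}₊ - [C_t]^{•k}₊ D⁻¹ C_tᵀ D` to the
top-right block of `C̄_t`. -/

lemma sum_take_get_append_singleton {α M : Type*} [AddCommMonoid M] (f : List α → α → M)
    (p : List α) (k : α) :
    ∑ s : Fin (p ++ [k]).length, f ((p ++ [k]).take s) ((p ++ [k]).get s) =
      ∑ s : Fin p.length, f (p.take s) (p.get s) + f p k := by
  have hlen : p.length + 1 = (p ++ [k]).length := by simp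
  rw [← Fin.sum_congr' _ hlen, Fin.sum_univ_castSucc]
  simp [List.take_append_of_le_length, List.getElem_append_left]

section Skew

variable {ι : Type} [DecidableEq ι]
variable {R : Type} [CommRing R] [LinearOrder R] [IsStrictOrderedRing R]

lemma mul_max_zero_eq_of_mul_eq_neg {r s x y : R} (hr : 0 < r) (hs : 0 < s)
    (h : r * x = -(s * y)) : r * max x 0 = s * max (-y) 0 := by
  rw [mul_max_of_nonneg _ _ hr.le, mul_max_of_nonneg _ _ hs.le, mul_zero, mul_zero, h, mul_neg]

lemma eq_zero_of_mul_eq_neg_self {r x : R} (hr : 0 < r) (h : r * x = -(r * x)) : x = 0 :=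
  (mul_eq_zero.mp (self_eq_neg.mp h)).resolve_left hr.ne'

lemma mutate_skew {d : ι → R} (hd : ∀ i, 0 < d i) {A : Matrix ι ι R}
    (hA : ∀ i j, d i * A i j = -(d j * A j i)) (k i j : ι) :
    d i * mutate A k i j = -(d j * mutate A k j i) := by
  by_cases hij : i = k ∨ j = k
  · simp only [mutate, if_pos hij, if_pos hij.symm, hA i j, mul_neg]
  · simp only [mutate, if_neg hij, if_neg (Or.comm.not.mp hij)]
    have hik := mul_max_zero_eq_of_mul_eq_neg (hd i) (hd k) (hA i k)
    have hjk := mul_max_zero_eq_of_mul_eq_neg (hd j) (hd k) (hA j k)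
    linear_combination hA i j + A k j * hik + max (-A k i) 0 * hA k j
      + max (-A k j) 0 * hA i k + A k i * hjk

end Skew

section Seeds

variable {ι : Type} [Fintype ι] [DecidableEq ι] {R : Type} [CommRing R]

lemma mul_rowSel_apply (A M : Matrix ι ι R) (k i j : ι) :
    (A * rowSel k M) i j = A i k * M k j := by
  simp [mul_apply, rowSel]

lemma colSel_mul_apply (M A : Matrix ι ι R) (k i j : ι) :
    (colSel k M * A) i j = M i k * A k j := by
  simp [mul_apply, colSel]

variable [LinearOrder R]

lemma seedOf_append_singleton (B0 : Matrix ι ι R) (p : List ι) (k : ι) :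
    seedOf B0 (p ++ [k]) = seedStep B0 (seedOf B0 p) k := by
  simp [seedOf, List.foldl_append]

lemma Bpath_append_singleton (B0 : Matrix ι ι R) (p : List ι) (k : ι) :
    Bpath B0 (p ++ [k]) = mutate (Bpath B0 p) k := by
  rw [Bpath, seedOf_append_singleton]
  rfl

lemma Cmat_append_singleton_apply (B0 : Matrix ι ι R) (p : List ι) (k i j : ι) :
    Cmat B0 (p ++ [k]) i j =
      (if j = k then -Cmat B0 p i j else Cmat B0 p i j)
        + Cmat B0 p i k * max (Bpath B0 p k j) 0
        + max (-Cmat B0 p i k) 0 * Bpath B0 p k j := by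
  rw [Cmat, seedOf_append_singleton]
  simp only [seedStep, Matrix.add_apply, Matrix.mul_add, mul_rowSel_apply, colSel_mul_apply,
    Jmat, mul_diagonal, matPos, Matrix.neg_apply, Cmat, Bpath]
  split_ifs <;> ring

lemma Cmat_row_of_not_mem (B0 : Matrix ι ι R) {r : ι} {p : List ι} (hr : r ∉ p) :
    Cmat B0 p r = (1 : Matrix ι ι R) r := by
  induction p using List.reverseRecOn with
  | nil => rfl
  | append_singleton p k ih =>
    simp only [List.mem_append, List.mem_singleton, not_or] at hr
    have hrow : ∀ c, Cmat B0 p r c = (1 : Matrix ι ι R) r c := congrFun (ih hr.1)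
    funext c
    rw [Cmat_append_singleton_apply, hrow, hrow, one_apply_ne hr.2]
    split_ifs with hc
    · rw [hc, one_apply_ne hr.2]; simp
    · simp

lemma Bpath_skew [IsStrictOrderedRing R] {d : ι → R} (hd : ∀ i, 0 < d i) {B0 : Matrix ι ι R}
    (hB0 : ∀ i j, d i * B0 i j = -(d j * B0 j i)) (p : List ι) (i j : ι) :
    d i * Bpath B0 p i j = -(d j * Bpath B0 p j i) := by
  induction p using List.reverseRecOn generalizing i j with
  | nil => exact hB0 i j
  | append_singleton p k ih =>
    rw [Bpath_append_singleton]
    exact mutate_skew hd ih k i j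

end Seeds

section Blocks

variable {ι κ : Type} [Fintype ι] [DecidableEq ι] [Fintype κ] [DecidableEq κ]
variable {R : Type} [CommRing R] [LinearOrder R]

lemma Bpath_map_inl_apply (B0 : Matrix (ι ⊕ κ) (ι ⊕ κ) R) (p : List ι) (i j : ι) :
    Bpath B0 (p.map Sum.inl) (Sum.inl i) (Sum.inl j) = Bpath B0.toBlocks₁₁ p i j := by
  induction p using List.reverseRecOn generalizing i j with
  | nil => rfl
  | append_singleton p k ih =>
    rw [List.map_append, List.map_singleton, Bpath_append_singleton, Bpath_append_singleton]
    simp only [mutate, Sum.inl.injEq, ih]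

lemma Cmat_map_inl_apply (B0 : Matrix (ι ⊕ κ) (ι ⊕ κ) R) (p : List ι) (i j : ι) :
    Cmat B0 (p.map Sum.inl) (Sum.inl i) (Sum.inl j) = Cmat B0.toBlocks₁₁ p i j := by
  induction p using List.reverseRecOn generalizing i j with
  | nil => simp [Cmat, seedOf, one_apply]
  | append_singleton p k ih =>
    rw [List.map_append, List.map_singleton, Cmat_append_singleton_apply,
      Cmat_append_singleton_apply]
    simp only [Sum.inl.injEq, ih, Bpath_map_inl_apply]

end Blocks

section PrincipalExtension

variable {n : ℕ} {B : Matrix (Fin n) (Fin n) ℤ} {d : Fin n → ℤ}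

lemma pext_toBlocks₁₁ (B : Matrix (Fin n) (Fin n) ℤ) : (pext B).toBlocks₁₁ = B :=
  toBlocks_fromBlocks₁₁ _ _ _ _

lemma transpose_diagonal_mul_eq_neg_iff :
    (diagonal d * B)ᵀ = -(diagonal d * B) ↔ ∀ i j, d i * B i j = -(d j * B j i) := by
  simp only [← Matrix.ext_iff, transpose_apply, neg_apply, diagonal_mul]
  exact forall_comm

lemma pext_Bpath_inl_inr (hd : ∀ i, 0 < d i) (hB : ∀ i j, d i * B i j = -(d j * B j i))
    (p : List (Fin n)) (i j : Fin n) :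
    d i * Bpath (pext B) (p.map Sum.inl) (Sum.inl i) (Sum.inr j) = -(d j * Cmat B p j i) := by
  induction p using List.reverseRecOn generalizing i j with
  | nil =>
    by_cases hij : i = j
    · subst hij; simp [Bpath, seedOf, pext, Cmat]
    · simp [Bpath, seedOf, pext, Cmat, one_apply_ne hij, one_apply_ne (Ne.symm hij)]
  | append_singleton p k ih =>
    rw [List.map_append, List.map_singleton, Bpath_append_singleton,
      Cmat_append_singleton_apply]
    have hskew := Bpath_skew hd hB p
    have htop : ∀ a b, Bpath (pext B) (p.map Sum.inl) (Sum.inl a) (Sum.inl b) = Bpath B p a b :=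
      fun a b => by rw [Bpath_map_inl_apply, pext_toBlocks₁₁]
    by_cases hik : i = k
    · subst hik
      have hdiag : Bpath B p i i = 0 := eq_zero_of_mul_eq_neg_self (hd i) (hskew i i)
      simp only [mutate, true_or, if_true, hdiag, max_self, mul_zero, add_zero]
      linear_combination -ih i j
    · have hne : ¬(Sum.inl i = (Sum.inl k : Fin n ⊕ Fin n) ∨ Sum.inr j = Sum.inl k) := by
        simp [hik]
      simp only [mutate, if_neg hne, if_neg hik, htop]
      set b := Bpath (pext B) (p.map Sum.inl)
      have hsign_ik := mul_max_zero_eq_of_mul_eq_neg (hd i) (hd k) (hskew i k)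
      have hsign_jk := mul_max_zero_eq_of_mul_eq_neg (hd j) (hd k) (by rw [ih k j, neg_neg])
      have hsplit_ki := max_zero_sub_max_neg_zero_eq_self (Bpath B p k i)
      have hsplit_jk := max_zero_sub_max_neg_zero_eq_self (Cmat B p j k)
      linear_combination ih i j + b (Sum.inl k) (Sum.inr j) * hsign_ik
        + max (-Bpath B p k i) 0 * ih k j + d j * Cmat B p j k * hsplit_ki
        + max (-b (Sum.inl k) (Sum.inr j)) 0 * hskew i k + Bpath B p k i * hsign_jk
        - d j * Bpath B p k i * hsplit_jk

lemma dCd_apply (hd : ∀ i, d i ≠ 0) (C : Matrix (Fin n) (Fin n) ℤ) (i j : Fin n) :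
    dCd d C i j = (d i : ℚ)⁻¹ * C j i * d j := by
  have hinv : (diagonal fun i => (d i : ℚ))⁻¹ = diagonal fun i => (d i : ℚ)⁻¹ :=
    inv_eq_left_inv (by simp [diagonal_mul_diagonal, hd])
  simp [dCd, hinv, mul_diagonal, diagonal_mul]

/-- The `s`-th summand of `X`, for `C = C_{t_s}` and `k = i_{s+1}`. -/
noncomputable def topRightStep (d : Fin n → ℤ) (C : Matrix (Fin n) (Fin n) ℤ) (k : Fin n) :
    Matrix (Fin n) (Fin n) ℚ :=
  C.map (↑) * rowSel k (matPos (dCd d C)) - colSel k (matPos (C.map (↑))) * dCd d C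

lemma topRightStep_apply (C : Matrix (Fin n) (Fin n) ℤ) (k i j : Fin n) :
    topRightStep d C k i j = C i k * max (dCd d C k j) 0 - max (C i k : ℚ) 0 * dCd d C k j := by
  simp [topRightStep, mul_rowSel_apply, colSel_mul_apply, matPos]

lemma pext_Cmat_inl_inr (hd : ∀ i, 0 < d i) (hB : ∀ i j, d i * B i j = -(d j * B j i))
    (p : List (Fin n)) (i j : Fin n) :
    ((Cmat (pext B) (p.map Sum.inl) (Sum.inl i) (Sum.inr j) : ℤ) : ℚ) =
      (∑ s : Fin p.length, topRightStep d (Cmat B (p.take s)) (p.get s)) i j := by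
  induction p using List.reverseRecOn generalizing i j with
  | nil => simp [Cmat, seedOf]
  | append_singleton p k ih =>
    rw [sum_take_get_append_singleton (fun q l => topRightStep d (Cmat B q) l),
      Matrix.add_apply, ← ih, topRightStep_apply, List.map_append, List.map_singleton,
      Cmat_append_singleton_apply, if_neg Sum.inr_ne_inl, Cmat_map_inl_apply, pext_toBlocks₁₁]
    have hb : ((Bpath (pext B) (p.map Sum.inl) (Sum.inl k) (Sum.inr j) : ℤ) : ℚ) =
        -dCd d (Cmat B p) k j := by
      have h : (d k : ℚ) * Bpath (pext B) (p.map Sum.inl) (Sum.inl k) (Sum.inr j) =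
          -(d j * Cmat B p j k) := by
        exact_mod_cast pext_Bpath_inl_inr hd hB p k j
      have hk : (d k : ℚ) ≠ 0 := by exact_mod_cast (hd k).ne'
      rw [dCd_apply (fun i => (hd i).ne')]
      field_simp
      linear_combination h
    push_cast
    rw [hb]
    set c : ℚ := ((Cmat B p i k : ℤ) : ℚ)
    set x := dCd d (Cmat B p) k j
    linear_combination -c * max_zero_sub_max_neg_zero_eq_self x
      + x * max_zero_sub_max_neg_zero_eq_self c

end PrincipalExtension

/-- block form of the `C`-matrix of the principal extension
(without sign-coherence). -/
theorem pext_Cmat_block {n : ℕ} (B : Matrix (Fin n) (Fin n) ℤ) (d : Fin n → ℤ)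
    (hd : ∀ i, 0 < d i)
    (hskew : (Matrix.diagonal d * B)ᵀ = -(Matrix.diagonal d * B)) (p : List (Fin n)) :
    (Cmat (pext B) (p.map Sum.inl)).map ((↑) : ℤ → ℚ) =
      Matrix.fromBlocks ((Cmat B p).map ((↑) : ℤ → ℚ))
        (∑ s : Fin p.length,
          (((Cmat B (p.take s.1)).map ((↑) : ℤ → ℚ)) *
              rowSel (p.get s) (matPos (dCd d (Cmat B (p.take s.1))))
            - colSel (p.get s) (matPos ((Cmat B (p.take s.1)).map ((↑) : ℤ → ℚ))) *
              dCd d (Cmat B (p.take s.1))))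
        0 1 := by
  have hB := transpose_diagonal_mul_eq_neg_iff.mp hskew
  have hbottom (i : Fin n) : Cmat (pext B) (p.map Sum.inl) (Sum.inr i) =
      (1 : Matrix (Fin n ⊕ Fin n) (Fin n ⊕ Fin n) ℤ) (Sum.inr i) :=
    Cmat_row_of_not_mem _ (by simp)
  ext (i | i) (j | j)
  · simp [Cmat_map_inl_apply, pext_toBlocks₁₁]
  · exact pext_Cmat_inl_inr hd hB p i j
  · simp [hbottom]
  · simp [hbottom, one_apply]
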